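/- arXiv:2104.01475 — 2 statements merged into one kernel-verified Lean document; each statement's English description precedes it below -/
import Mathlib

section
/- If λ ∉ ℤ, then the principal series module I_{λ,ε} is irreducible: every nonzero sl₂-invariant subspace equals the whole module. -/
/-! The principal series module `I_{λ,ε}` in the compact picture: basis
`{w_k : k ≡ ε (mod 2)}`, parametrized as `k = ε + 2n`, with `w_{ε+2n}` encoded
as `Finsupp.single n 1` in `ℤ →₀ ℂ`. -/

/-- `H · w_k = k · w_k`. -/
noncomputable def psH (ε : ℤ) : (ℤ →₀ ℂ) →ₗ[ℂ] (ℤ →₀ ℂ) :=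
  Finsupp.lsum ℂ fun n : ℤ => (((ε + 2 * n : ℤ) : ℂ)) • Finsupp.lsingle n

/-- `E · w_k = ((λ+k+1)/2) · w_{k+2}`. -/
noncomputable def psE (L : ℂ) (ε : ℤ) : (ℤ →₀ ℂ) →ₗ[ℂ] (ℤ →₀ ℂ) :=
  Finsupp.lsum ℂ fun n : ℤ => ((L + ((ε + 2 * n : ℤ) : ℂ) + 1) / 2) • Finsupp.lsingle (n + 1)

/-- `F · w_k = ((λ−k+1)/2) · w_{k−2}`. -/
noncomputable def psF (L : ℂ) (ε : ℤ) : (ℤ →₀ ℂ) →ₗ[ℂ] (ℤ →₀ ℂ) :=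
  Finsupp.lsum ℂ fun n : ℤ => ((L - ((ε + 2 * n : ℤ) : ℂ) + 1) / 2) • Finsupp.lsingle (n - 1)

/-- A subspace of `I_{λ,ε}` is sl₂-invariant if it is stable under `H`, `E` and `F`. -/
def SL2Invariant (L : ℂ) (ε : ℤ) (W : Submodule ℂ (ℤ →₀ ℂ)) : Prop :=
  (∀ x ∈ W, psH ε x ∈ W) ∧ (∀ x ∈ W, psE L ε x ∈ W) ∧ (∀ x ∈ W, psF L ε x ∈ W)

lemma psH_apply (ε : ℤ) (x : ℤ →₀ ℂ) (m : ℤ) : psH ε x m = ((ε + 2*m : ℤ):ℂ) * x m := by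
  rw [psH, Finsupp.lsum_apply, Finsupp.sum_apply, Finsupp.sum]
  simp only [LinearMap.smul_apply, Finsupp.lsingle_apply, Finsupp.smul_apply, Finsupp.single_apply]
  rw [Finset.sum_eq_single m]
  · by_cases h : m ∈ x.support
    · simp
    · simp at h; simp [h]
  · intro b _ hb; simp [hb]
  · intro h; simp at h; simp [h]

lemma psE_single (L : ℂ) (ε n : ℤ) :
    psE L ε (Finsupp.single n 1) =
      ((L + ((ε + 2 * n : ℤ) : ℂ) + 1) / 2) • Finsupp.single (n + 1) 1 := by
  rw [psE, Finsupp.lsum_single]; simp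

lemma psF_single (L : ℂ) (ε n : ℤ) :
    psF L ε (Finsupp.single n 1) =
      ((L - ((ε + 2 * n : ℤ) : ℂ) + 1) / 2) • Finsupp.single (n - 1) 1 := by
  rw [psF, Finsupp.lsum_single]; simp

lemma singles_mem (ε : ℤ) (W : Submodule ℂ (ℤ →₀ ℂ)) (hH : ∀ x ∈ W, psH ε x ∈ W) :
    ∀ N : ℕ, ∀ x ∈ W, x.support.card ≤ N → ∀ n ∈ x.support, Finsupp.single n (1:ℂ) ∈ W := by
  intro N
  induction N with
  | zero => intro x _ hc n hn; rw [Nat.le_zero, Finset.card_eq_zero] at hc; simp [hc] at hn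
  | succ N ih =>
    intro x hx hc n hn
    set y : ℤ →₀ ℂ := psH ε x - ((ε + 2*n : ℤ):ℂ) • x with hy
    have hyW : y ∈ W := sub_mem (hH x hx) (W.smul_mem _ hx)
    have hyval : ∀ m, y m = ((2*(m - n) : ℤ):ℂ) * x m := by
      intro m
      simp only [hy, Finsupp.sub_apply, Finsupp.smul_apply, psH_apply, smul_eq_mul]
      push_cast; ring
    have hysupp : y.support = x.support.erase n := by
      ext m
      simp only [Finsupp.mem_support_iff, Finset.mem_erase, hyval]
      constructor
      · intro h
        refine ⟨fun hmn => ?_, fun h0 => by simp [h0] at h⟩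
        subst hmn; simp at h
      · rintro ⟨h1, h2⟩
        have : ((2*(m-n):ℤ):ℂ) ≠ 0 := by
          simp only [ne_eq, Int.cast_eq_zero]; omega
        exact mul_ne_zero this h2
    have hycard : y.support.card ≤ N := by
      rw [hysupp]
      have := Finset.card_erase_of_mem hn
      omega
    have hsing : ∀ m ∈ y.support, Finsupp.single m (1:ℂ) ∈ W := fun m hm => ih y hyW hycard m hm
    -- z = x - Σ_{m ∈ y.support} x m • single m 1  equals single n (x n)
    have hzW : x - ∑ m ∈ y.support, x m • Finsupp.single m (1:ℂ) ∈ W :=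
      sub_mem hx (Submodule.sum_mem W fun m hm => W.smul_mem _ (hsing m hm))
    have hz : x - ∑ m ∈ y.support, x m • Finsupp.single m (1:ℂ) = Finsupp.single n (x n) := by
      ext k
      simp only [Finsupp.sub_apply, Finsupp.coe_finset_sum, Finset.sum_apply,
        Finsupp.smul_apply, Finsupp.single_apply, smul_eq_mul, mul_ite, mul_one, mul_zero]
      rw [Finset.sum_ite_eq' y.support k (fun m => x m)]
      by_cases hk : k ∈ y.support
      · simp only [hk, if_true]
        have : k ≠ n := by rw [hysupp] at hk; exact (Finset.mem_erase.mp hk).1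
        simp [Ne.symm this]
      · simp only [hk, if_false, sub_zero]
        by_cases hkn : k = n
        · subst hkn; simp
        · have : x k = 0 := by
            by_contra h
            exact hk (by rw [hysupp]; exact Finset.mem_erase.mpr ⟨hkn, Finsupp.mem_support_iff.mpr h⟩)
          simp [this, Ne.symm hkn]
    rw [hz] at hzW
    have hxn : x n ≠ 0 := Finsupp.mem_support_iff.mp hn
    have := W.smul_mem (x n)⁻¹ hzW
    rwa [Finsupp.smul_single, smul_eq_mul, inv_mul_cancel₀ hxn] at this

/-- If `λ ∉ ℤ`, the principal series `I_{λ,ε}` is irreducible: every nonzero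
sl₂-invariant subspace is the whole module. -/
theorem principal_series_irreducible_of_not_integral (L : ℂ) (ε : ℤ) (hε : ε = 0 ∨ ε = 1)
    (hL : ∀ m : ℤ, L ≠ (m : ℂ)) (W : Submodule ℂ (ℤ →₀ ℂ))
    (hW : SL2Invariant L ε W) (hW0 : W ≠ ⊥) : W = ⊤ := by
  obtain ⟨hH, hE, hF⟩ := hW
  obtain ⟨x, hxW, hx0⟩ := Submodule.exists_mem_ne_zero_of_ne_bot hW0
  have hsupp : x.support.Nonempty := Finsupp.support_nonempty_iff.mpr hx0
  obtain ⟨n₀, hn₀⟩ := hsupp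
  have hbase : Finsupp.single n₀ (1:ℂ) ∈ W :=
    singles_mem ε W hH x.support.card x hxW le_rfl n₀ hn₀
  -- step lemmas
  have stepE : ∀ n : ℤ, Finsupp.single n (1:ℂ) ∈ W → Finsupp.single (n+1) (1:ℂ) ∈ W := by
    intro n hn
    have hco : (L + ((ε + 2 * n : ℤ) : ℂ) + 1) / 2 ≠ 0 := by
      intro h
      rw [div_eq_zero_iff] at h
      rcases h with h | h
      · exact hL (-(ε + 2*n + 1)) (by push_cast at h ⊢; linear_combination h)
      · norm_num at h
    have := W.smul_mem ((L + ((ε + 2 * n : ℤ) : ℂ) + 1) / 2)⁻¹ (hE _ hn)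
    rwa [psE_single, smul_smul, inv_mul_cancel₀ hco, one_smul] at this
  have stepF : ∀ n : ℤ, Finsupp.single n (1:ℂ) ∈ W → Finsupp.single (n-1) (1:ℂ) ∈ W := by
    intro n hn
    have hco : (L - ((ε + 2 * n : ℤ) : ℂ) + 1) / 2 ≠ 0 := by
      intro h
      rw [div_eq_zero_iff] at h
      rcases h with h | h
      · exact hL (ε + 2*n - 1) (by push_cast at h ⊢; linear_combination h)
      · norm_num at h
    have := W.smul_mem ((L - ((ε + 2 * n : ℤ) : ℂ) + 1) / 2)⁻¹ (hF _ hn)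
    rwa [psF_single, smul_smul, inv_mul_cancel₀ hco, one_smul] at this
  have hall : ∀ n : ℤ, Finsupp.single n (1:ℂ) ∈ W := by
    have key : ∀ n : ℤ, Finsupp.single (n₀ + n) (1:ℂ) ∈ W := by
      intro n
      induction n using Int.induction_on with
      | zero => simpa using hbase
      | succ i ihi => have := stepE _ ihi; convert this using 2; push_cast; ring
      | pred i ihi => have := stepF _ ihi; convert this using 2; push_cast; ring
    intro n
    have := key (n - n₀)
    rwa [add_sub_cancel] at this
  rw [eq_top_iff]
  intro v _
  have hv : v = v.sum fun n c => c • Finsupp.single n (1:ℂ) := by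
    conv_lhs => rw [← Finsupp.sum_single v]
    exact Finsupp.sum_congr fun n _ => by rw [Finsupp.smul_single, smul_eq_mul, mul_one]
  rw [hv]
  exact Submodule.finsuppSum_mem ℂ W v _ fun n _ => W.smul_mem _ (hall n)
end

section
/- If λ ∈ ℤ, λ > 0, and λ ≢ ε (mod 2), then the subspace D⁺ of I_{λ,ε} spanned by {w_k : k ≥ λ+1} and the subspace D⁻ spanned by {w_k : k ≤ −λ−1} are sl₂-invariant subspaces, and the quotient I_{λ,ε}/(D⁺ ⊕ D⁻) has dimension λ. -/
/-- `D⁺`: the span of the basis vectors `w_k` with `k ≥ λ+1`. -/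
noncomputable def Dplus (lam ε : ℤ) : Submodule ℂ (ℤ →₀ ℂ) :=
  Submodule.span ℂ {f | ∃ n : ℤ, lam + 1 ≤ ε + 2 * n ∧ f = Finsupp.single n 1}

/-- `D⁻`: the span of the basis vectors `w_k` with `k ≤ −λ−1`. -/
noncomputable def Dminus (lam ε : ℤ) : Submodule ℂ (ℤ →₀ ℂ) :=
  Submodule.span ℂ {f | ∃ n : ℤ, ε + 2 * n ≤ -lam - 1 ∧ f = Finsupp.single n 1}

/-- A span is stable under a linear map if the generators are mapped into it. -/
lemma span_stable {φ : (ℤ →₀ ℂ) →ₗ[ℂ] (ℤ →₀ ℂ)} {s : Set (ℤ →₀ ℂ)}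
    (h : ∀ f ∈ s, φ f ∈ Submodule.span ℂ s) :
    ∀ x ∈ Submodule.span ℂ s, φ x ∈ Submodule.span ℂ s := fun x hx =>
  Submodule.span_le.2 (fun f hf => show f ∈ (Submodule.span ℂ s).comap φ from h f hf) hx

lemma psH_single (ε n : ℤ) :
    psH ε (Finsupp.single n 1) = ((ε + 2 * n : ℤ) : ℂ) • Finsupp.single n 1 := by
  rw [psH, Finsupp.lsum_single, LinearMap.smul_apply, Finsupp.lsingle_apply]

/-- For `λ ∈ ℤ`, `λ > 0`, `λ ≢ ε (mod 2)`: the subspaces `D⁺` and `D⁻` of `I_{λ,ε}` are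
sl₂-invariant, they intersect trivially, and the quotient `I_{λ,ε}/(D⁺ ⊕ D⁻)` has
dimension `λ`. -/
theorem discrete_series_submodules (lam ε : ℤ) (hε : ε = 0 ∨ ε = 1) (hpos : 0 < lam)
    (hpar : lam % 2 ≠ ε % 2) :
    SL2Invariant (lam : ℂ) ε (Dplus lam ε) ∧
    SL2Invariant (lam : ℂ) ε (Dminus lam ε) ∧
    Dplus lam ε ⊓ Dminus lam ε = ⊥ ∧
    Module.finrank ℂ ((ℤ →₀ ℂ) ⧸ (Dplus lam ε ⊔ Dminus lam ε)) = lam.toNat := by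
  obtain ⟨t, ht⟩ : ∃ t : ℤ, lam + ε = 2 * t + 1 := ⟨(lam + ε - 1) / 2, by omega⟩
  -- invariance of D⁺
  refine ⟨⟨?_, ?_, ?_⟩, ⟨?_, ?_, ?_⟩, ?_, ?_⟩
  · refine span_stable ?_
    rintro f ⟨n, hn, rfl⟩
    rw [psH_single]
    exact Submodule.smul_mem _ _ (Submodule.subset_span ⟨n, hn, rfl⟩)
  · refine span_stable ?_
    rintro f ⟨n, hn, rfl⟩
    rw [psE_single]
    exact Submodule.smul_mem _ _ (Submodule.subset_span ⟨n + 1, by omega, rfl⟩)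
  · refine span_stable ?_
    rintro f ⟨n, hn, rfl⟩
    rw [psF_single]
    by_cases hb : ε + 2 * n = lam + 1
    · have h0 : ((lam : ℂ) - ((ε + 2 * n : ℤ) : ℂ) + 1) = 0 := by
        rw [hb]; push_cast; ring
      rw [h0]
      simp
    · exact Submodule.smul_mem _ _ (Submodule.subset_span ⟨n - 1, by omega, rfl⟩)
  -- invariance of D⁻
  · refine span_stable ?_
    rintro f ⟨n, hn, rfl⟩
    rw [psH_single]
    exact Submodule.smul_mem _ _ (Submodule.subset_span ⟨n, hn, rfl⟩)
  · refine span_stable ?_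
    rintro f ⟨n, hn, rfl⟩
    rw [psE_single]
    by_cases hb : ε + 2 * n = -lam - 1
    · have h0 : ((lam : ℂ) + ((ε + 2 * n : ℤ) : ℂ) + 1) = 0 := by
        rw [hb]; push_cast; ring
      rw [h0]
      simp
    · exact Submodule.smul_mem _ _ (Submodule.subset_span ⟨n + 1, by omega, rfl⟩)
  · refine span_stable ?_
    rintro f ⟨n, hn, rfl⟩
    rw [psF_single]
    exact Submodule.smul_mem _ _ (Submodule.subset_span ⟨n - 1, by omega, rfl⟩)
  -- identification with supported submodules
  all_goals {
    have hDp : Dplus lam ε = Finsupp.supported ℂ ℂ {n : ℤ | t + 1 - ε ≤ n} := by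
      rw [Dplus, Finsupp.supported_eq_span_single]
      congr 1
      ext f
      simp only [Set.mem_setOf_eq, Set.mem_image]
      constructor
      · rintro ⟨n, hn, rfl⟩; exact ⟨n, by omega, rfl⟩
      · rintro ⟨n, hn, rfl⟩; exact ⟨n, by omega, rfl⟩
    have hDm : Dminus lam ε = Finsupp.supported ℂ ℂ {n : ℤ | n ≤ -t - 1} := by
      rw [Dminus, Finsupp.supported_eq_span_single]
      congr 1
      ext f
      simp only [Set.mem_setOf_eq, Set.mem_image]
      constructor
      · rintro ⟨n, hn, rfl⟩; exact ⟨n, by omega, rfl⟩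
      · rintro ⟨n, hn, rfl⟩; exact ⟨n, by omega, rfl⟩
    first
    | -- trivial intersection
      (rw [hDp, hDm, ← Finsupp.supported_inter]
       have he : {n : ℤ | t + 1 - ε ≤ n} ∩ {n : ℤ | n ≤ -t - 1} = (∅ : Set ℤ) := by
         ext n; simp only [Set.mem_inter_iff, Set.mem_setOf_eq, Set.mem_empty_iff_false,
           iff_false, not_and]; omega
       rw [he, Finsupp.supported_empty])
    | -- dimension of the quotient
      (rw [hDp, hDm, ← Finsupp.supported_union]
       have hc : {n : ℤ | t + 1 - ε ≤ n} ∪ {n : ℤ | n ≤ -t - 1} = (Set.Icc (-t) (t - ε))ᶜ := by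
         ext n
         simp only [Set.mem_union, Set.mem_setOf_eq, Set.mem_compl_iff, Set.mem_Icc, not_and,
           not_le]
         omega
       rw [hc]
       have hcompl : IsCompl (Finsupp.supported ℂ ℂ (Set.Icc (-t) (t - ε))ᶜ)
           (Finsupp.supported ℂ ℂ (Set.Icc (-t) (t - ε))) := by
         constructor
         · exact Finsupp.disjoint_supported_supported disjoint_compl_left
         · rw [codisjoint_iff, ← Finsupp.supported_union, Set.compl_union_self,
             Finsupp.supported_univ]
       have e1 := Submodule.quotientEquivOfIsCompl _ _ hcompl
       have e2 := Finsupp.supportedEquivFinsupp (M := ℂ) (R := ℂ) (Set.Icc (-t) (t - ε))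
       rw [e1.finrank_eq, e2.finrank_eq, Module.finrank_finsupp_self, Fintype.card_Icc, Int.card_Icc]
       omega) }
end
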